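/- arXiv:1111.5302 — 3 statements merged into one kernel-verified Lean document; each statement's English description precedes it below -/
import Mathlib

section
/- Let θ ∈ ℝ^N be such that κ_i(θ) ≠ 0 for all i, and set τ(θ) = Σ_{i=1}^N 1/κ_i(θ). If τ(θ) < 2, then the number of positive eigenvalues of J(θ) (with multiplicity) equals the number of positive eigenvalues of −D(θ); if τ(θ) > 2, then the number of positive eigenvalues of J(θ) equals the number of positive eigenvalues of −D(θ) plus one. -/
open Real Matrix Finset

/-- `κ_i(θ) = Σ_j cos (θ_j - θ_i)`. -/
noncomputable def kappa (N : ℕ) (θ : Fin N → ℝ) (i : Fin N) : ℝ :=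
  ∑ j, Real.cos (θ j - θ i)

/-- The diagonal matrix `D(θ)` with diagonal entries `κ_i(θ)`. -/
noncomputable def Dmat (N : ℕ) (θ : Fin N → ℝ) : Matrix (Fin N) (Fin N) ℝ :=
  Matrix.diagonal (kappa N θ)

/-- The Jacobian `J(θ)` of the Kuramoto vector field: `J_ij = cos (θ_i - θ_j)` off the
diagonal and `J_ii = -Σ_{k ≠ i} cos (θ_k - θ_i)`. -/
noncomputable def Jmat (N : ℕ) (θ : Fin N → ℝ) : Matrix (Fin N) (Fin N) ℝ :=
  Matrix.of fun i j =>
    if i = j then -∑ k ∈ Finset.univ \ {i}, Real.cos (θ k - θ i)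
    else Real.cos (θ i - θ j)

/-
`J = -D + B Bᵀ` with `B = [v w]` is the Schur complement of the `-1` block of the symmetric block
matrix `M = !![-D, B; Bᵀ, -1]`, while the Schur complement of its `-D` block is the `2 × 2` matrix
`S = -1 + Bᵀ D⁻¹ B`. Sylvester's law of inertia, applied to the two block diagonalisations of `M`,
gives `n₊(J) + n₊(-1) = n₊(-D) + n₊(S)` (Haynsworth). Writing `κ_i = ⟨(Σ sin θ_j, Σ cos θ_j),
(sin θ_i, cos θ_i)⟩` one computes that the quadratic form of `S` is `(τ - 2) / R²` times the
square of a nonzero linear form, `R² = (Σ sin θ_j)² + (Σ cos θ_j)² > 0`, so `n₊(S)` is `0` or `1`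
according to the sign of `τ - 2`.
-/

open Module

section PositiveIndex

variable {V W : Type*} [AddCommGroup V] [Module ℝ V] [AddCommGroup W] [Module ℝ W]

/-- `p` is the positive index of inertia of `q`, which is well defined by
`HasPositiveIndex.unique`. -/
def HasPositiveIndex (q : V → ℝ) (p : ℕ) : Prop :=
  ∃ P Q : Submodule ℝ V, (∀ x ∈ P, x ≠ 0 → 0 < q x) ∧ (∀ x ∈ Q, q x ≤ 0) ∧
    finrank ℝ P = p ∧ finrank ℝ Q + p = finrank ℝ V

namespace HasPositiveIndex

variable {q : V → ℝ} {p p' : ℕ}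

theorem le [FiniteDimensional ℝ V] (h : HasPositiveIndex q p) (h' : HasPositiveIndex q p') :
    p ≤ p' := by
  obtain ⟨P, -, hP, -, rfl, -⟩ := h
  obtain ⟨-, Q, -, hQ, -, hdim⟩ := h'
  have hdisj : Disjoint P Q := Submodule.disjoint_def.2 fun x hxP hxQ =>
    by_contra fun hx => (hQ x hxQ).not_gt (hP x hxP hx)
  have := Submodule.finrank_add_finrank_le_of_disjoint hdisj
  omega

theorem unique [FiniteDimensional ℝ V] (h : HasPositiveIndex q p) (h' : HasPositiveIndex q p') :
    p = p' :=
  (h.le h').antisymm (h'.le h)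

theorem comp (e : W ≃ₗ[ℝ] V) (h : HasPositiveIndex q p) : HasPositiveIndex (q ∘ e) p := by
  obtain ⟨P, Q, hP, hQ, hPdim, hQdim⟩ := h
  refine ⟨P.comap (e : W →ₗ[ℝ] V), Q.comap (e : W →ₗ[ℝ] V), fun x hx hx0 => hP _ hx (by simpa),
    fun x hx => hQ _ hx, ?_, ?_⟩ <;>
  rw [Submodule.comap_equiv_eq_map_symm, LinearEquiv.finrank_map_eq]
  · exact hPdim
  · rw [hQdim, e.finrank_eq]

end HasPositiveIndex

theorem Submodule.finrank_prod [FiniteDimensional ℝ V] [FiniteDimensional ℝ W]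
    (P : Submodule ℝ V) (Q : Submodule ℝ W) :
    finrank ℝ (P.prod Q) = finrank ℝ P + finrank ℝ Q := by
  have h := LinearMap.finrank_range_of_inj (f := P.subtype.prodMap Q.subtype)
    (Subtype.val_injective.prodMap Subtype.val_injective)
  rwa [LinearMap.range_prodMap, P.range_subtype, Q.range_subtype, Module.finrank_prod] at h

theorem HasPositiveIndex.prod [FiniteDimensional ℝ V] [FiniteDimensional ℝ W]
    {q₁ : V → ℝ} {q₂ : W → ℝ} {p₁ p₂ : ℕ} (hq₁ : q₁ 0 = 0) (hq₂ : q₂ 0 = 0)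
    (h₁ : HasPositiveIndex q₁ p₁) (h₂ : HasPositiveIndex q₂ p₂) :
    HasPositiveIndex (fun z : V × W => q₁ z.1 + q₂ z.2) (p₁ + p₂) := by
  obtain ⟨P₁, Q₁, hP₁, hQ₁, hP₁dim, hQ₁dim⟩ := h₁
  obtain ⟨P₂, Q₂, hP₂, hQ₂, hP₂dim, hQ₂dim⟩ := h₂
  refine ⟨P₁.prod P₂, Q₁.prod Q₂, ?_, fun z hz => add_nonpos (hQ₁ _ hz.1) (hQ₂ _ hz.2), ?_, ?_⟩
  · rintro ⟨x, y⟩ ⟨hx, hy⟩ hxy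
    have hy₀ : 0 ≤ q₂ y := by
      rcases eq_or_ne y 0 with rfl | hy0
      exacts [hq₂.ge, (hP₂ y hy hy0).le]
    rcases eq_or_ne x 0 with rfl | hx0
    · have hy0 : y ≠ 0 := by rintro rfl; exact hxy rfl
      simpa [hq₁] using hP₂ y hy hy0
    · exact add_pos_of_pos_of_nonneg (hP₁ x hx hx0) hy₀
  · rw [Submodule.finrank_prod, hP₁dim, hP₂dim]
  · rw [Submodule.finrank_prod, Module.finrank_prod]
    omega

/-- Both sums are the positive index of the form `q₁ x + q₂ (y + f x)` on `V × W`, seen through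
the shears `(x, y) ↦ (x, y + f x)` and `(x, y) ↦ (x + g y, y)`. -/
theorem HasPositiveIndex.add_eq_add_of_shear [FiniteDimensional ℝ V] [FiniteDimensional ℝ W]
    {q₁ q₃ : V → ℝ} {q₂ q₄ : W → ℝ} {p₁ p₂ p₃ p₄ : ℕ} (f : V →ₗ[ℝ] W) (g : W →ₗ[ℝ] V)
    (hq : ∀ x y, q₁ x + q₂ (y + f x) = q₃ (x + g y) + q₄ y)
    (hq₁ : q₁ 0 = 0) (hq₂ : q₂ 0 = 0) (hq₃ : q₃ 0 = 0) (hq₄ : q₄ 0 = 0)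
    (h₁ : HasPositiveIndex q₁ p₁) (h₂ : HasPositiveIndex q₂ p₂)
    (h₃ : HasPositiveIndex q₃ p₃) (h₄ : HasPositiveIndex q₄ p₄) :
    p₁ + p₂ = p₃ + p₄ := by
  have h₁₂ := (h₁.prod hq₁ hq₂ h₂).comp ((LinearEquiv.refl ℝ V).skewProd (.refl ℝ W) f)
  have h₄₃ := (h₄.prod hq₄ hq₃ h₃).comp
    ((LinearEquiv.prodComm ℝ V W).trans ((LinearEquiv.refl ℝ W).skewProd (.refl ℝ V) g))
  have hΦ : (fun z : W × V => q₄ z.1 + q₃ z.2) ∘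
      ((LinearEquiv.prodComm ℝ V W).trans ((LinearEquiv.refl ℝ W).skewProd (.refl ℝ V) g)) =
      (fun z : V × W => q₁ z.1 + q₂ z.2) ∘ ((LinearEquiv.refl ℝ V).skewProd (.refl ℝ W) f) := by
    ext ⟨x, y⟩
    simp [hq, add_comm]
  rw [hΦ] at h₄₃
  rw [h₁₂.unique h₄₃, add_comm]

theorem hasPositiveIndex_zero_of_nonpos {q : V → ℝ} (hq : ∀ x, q x ≤ 0) : HasPositiveIndex q 0 :=
  ⟨⊥, ⊤, fun x hx hx0 => absurd ((Submodule.mem_bot ℝ).1 hx) hx0, fun x _ => hq x,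
    finrank_bot ℝ V, by rw [finrank_top, add_zero]⟩

theorem Module.Dual.hasPositiveIndex_mul_sq [FiniteDimensional ℝ V] {ℓ : Module.Dual ℝ V}
    (hℓ : ℓ ≠ 0) {t : ℝ} (ht : 0 < t) :
    HasPositiveIndex (fun x => t * ℓ x ^ 2) 1 := by
  obtain ⟨v, hv⟩ : ∃ v, ℓ v ≠ 0 := by simpa [LinearMap.ext_iff] using hℓ
  have hv0 : v ≠ 0 := by rintro rfl; exact hv (map_zero ℓ)
  refine ⟨ℝ ∙ v, LinearMap.ker ℓ, ?_, fun x hx => by simp [LinearMap.mem_ker.1 hx],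
    finrank_span_singleton hv0, Module.Dual.finrank_ker_add_one_of_ne_zero hℓ⟩
  rintro x hx hx0
  obtain ⟨a, rfl⟩ := Submodule.mem_span_singleton.1 hx
  have ha : a ≠ 0 := by rintro rfl; exact hx0 (zero_smul ℝ v)
  simp only [map_smul, smul_eq_mul]
  positivity

end PositiveIndex

section Diagonalization

variable {n : Type*}

theorem mem_ker_funLeft_subtypeVal {p : n → Prop} {x : n → ℝ} :
    x ∈ LinearMap.ker (LinearMap.funLeft ℝ ℝ (Subtype.val : {i // p i} → n)) ↔
      ∀ i, p i → x i = 0 := by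
  simp [funext_iff, LinearMap.funLeft_apply]

variable [Fintype n]

theorem finrank_ker_funLeft_subtypeVal_add_card (p : n → Prop) [DecidablePred p] :
    finrank ℝ (LinearMap.ker (LinearMap.funLeft ℝ ℝ (Subtype.val : {i // p i} → n))) +
      Fintype.card {i // p i} = Fintype.card n := by
  have hsurj := LinearMap.funLeft_surjective_of_injective ℝ ℝ (Subtype.val : {i // p i} → n)
    Subtype.val_injective
  have h := LinearMap.finrank_range_add_finrank_ker
    (LinearMap.funLeft ℝ ℝ (Subtype.val : {i // p i} → n))
  rw [LinearMap.range_eq_top.2 hsurj, finrank_top, Module.finrank_fintype_fun_eq_card,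
    Module.finrank_fintype_fun_eq_card] at h
  omega

theorem hasPositiveIndex_sum_mul_sq (μ : n → ℝ) :
    HasPositiveIndex (fun x : n → ℝ => ∑ i, μ i * x i ^ 2) #{i | 0 < μ i} := by
  refine ⟨LinearMap.ker (LinearMap.funLeft ℝ ℝ (Subtype.val : {i // ¬ 0 < μ i} → n)),
    LinearMap.ker (LinearMap.funLeft ℝ ℝ (Subtype.val : {i // 0 < μ i} → n)), ?_, ?_, ?_, ?_⟩
  · intro x hx hx0
    rw [mem_ker_funLeft_subtypeVal] at hx
    obtain ⟨i, hi⟩ := Function.ne_iff.1 hx0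
    have hi : x i ≠ 0 := hi
    have hμi : 0 < μ i := by_contra fun h => hi (hx i h)
    refine Finset.sum_pos' (fun j _ => ?_) ⟨i, mem_univ i, by positivity⟩
    by_cases hμj : 0 < μ j
    · positivity
    · simp [hx j hμj]
  · intro x hx
    rw [mem_ker_funLeft_subtypeVal] at hx
    refine Finset.sum_nonpos fun j _ => ?_
    by_cases hμj : 0 < μ j
    · simp [hx j hμj]
    · exact mul_nonpos_of_nonpos_of_nonneg (not_lt.1 hμj) (sq_nonneg _)
  · have h₁ := finrank_ker_funLeft_subtypeVal_add_card fun i => ¬ 0 < μ i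
    have h₂ : Fintype.card {i // 0 < μ i} + Fintype.card {i // ¬ 0 < μ i} = Fintype.card n := by
      simp only [Fintype.card_subtype, card_filter_add_card_filter_not, card_univ]
    rw [← Fintype.card_subtype]
    omega
  · rw [← Fintype.card_subtype, finrank_ker_funLeft_subtypeVal_add_card,
      Module.finrank_fintype_fun_eq_card]

theorem Matrix.IsHermitian.dotProduct_mulVec_eq_sum [DecidableEq n] {A : Matrix n n ℝ}
    (hA : A.IsHermitian) (x : n → ℝ) :
    x ⬝ᵥ A *ᵥ x =
      ∑ i, hA.eigenvalues i * ((hA.eigenvectorUnitary : Matrix n n ℝ)ᵀ *ᵥ x) i ^ 2 := by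
  conv_lhs => rw [hA.spectral_theorem, Unitary.conjStarAlgAut_apply]
  rw [← mulVec_mulVec, ← mulVec_mulVec, dotProduct_mulVec, ← mulVec_transpose,
    star_eq_conjTranspose, conjTranspose_eq_transpose_of_trivial]
  simp only [dotProduct, mulVec_diagonal, RCLike.ofReal_real_eq_id, Function.comp_apply, id]
  exact Finset.sum_congr rfl fun i _ => by ring

theorem Matrix.IsHermitian.hasPositiveIndex [DecidableEq n] {A : Matrix n n ℝ}
    (hA : A.IsHermitian) :
    HasPositiveIndex (fun x : n → ℝ => x ⬝ᵥ A *ᵥ x) #{i | 0 < hA.eigenvalues i} := by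
  convert (hasPositiveIndex_sum_mul_sq hA.eigenvalues).comp
    (Matrix.UnitaryGroup.toLinearEquiv hA.eigenvectorUnitary⁻¹) using 1
  ext x
  change _ = ∑ i, _ * ((star (hA.eigenvectorUnitary : Matrix n n ℝ)) *ᵥ x) i ^ 2
  rw [hA.dotProduct_mulVec_eq_sum, star_eq_conjTranspose, conjTranspose_eq_transpose_of_trivial]

end Diagonalization

section Haynsworth

variable {n m : Type*} [Fintype n] [Fintype m] [DecidableEq n]

theorem Matrix.IsSymm.dotProduct_mulVec_add_inv_mul_mulVec {A : Matrix n n ℝ} (hA : A.IsSymm)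
    (hdet : IsUnit A.det) (B : Matrix n m ℝ) (x : n → ℝ) (y : m → ℝ) :
    (x + (A⁻¹ * B) *ᵥ y) ⬝ᵥ A *ᵥ (x + (A⁻¹ * B) *ᵥ y) =
      x ⬝ᵥ A *ᵥ x + 2 * (x ⬝ᵥ B *ᵥ y) + y ⬝ᵥ (Bᵀ * A⁻¹ * B) *ᵥ y := by
  set z := (A⁻¹ * B) *ᵥ y
  have hAz : A *ᵥ z = B *ᵥ y := by
    rw [mulVec_mulVec, mul_nonsing_inv_cancel_left _ _ hdet]
  have hzx : z ⬝ᵥ A *ᵥ x = x ⬝ᵥ B *ᵥ y := by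
    rw [dotProduct_mulVec, ← mulVec_transpose, hA.eq, hAz, dotProduct_comm]
  have hzz : y ⬝ᵥ (Bᵀ * A⁻¹ * B) *ᵥ y = z ⬝ᵥ A *ᵥ z := by
    rw [hAz, Matrix.mul_assoc, ← mulVec_mulVec, dotProduct_mulVec, vecMul_transpose,
      dotProduct_comm]
  rw [mulVec_add, dotProduct_add, add_dotProduct, add_dotProduct, hAz, hzx, hzz, hAz]
  ring

variable [DecidableEq m]

/-- Haynsworth inertia additivity, for the two Schur complements of `!![A, B; Bᵀ, C]`. -/
theorem Matrix.hasPositiveIndex_add_schur {A : Matrix n n ℝ} {C : Matrix m m ℝ}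
    (hA : A.IsSymm) (hC : C.IsSymm) (hAdet : IsUnit A.det) (hCdet : IsUnit C.det)
    (B : Matrix n m ℝ) {a c s t : ℕ}
    (ha : HasPositiveIndex (fun x => x ⬝ᵥ A *ᵥ x) a)
    (hs : HasPositiveIndex (fun y => y ⬝ᵥ (C - Bᵀ * A⁻¹ * B) *ᵥ y) s)
    (hc : HasPositiveIndex (fun y => y ⬝ᵥ C *ᵥ y) c)
    (ht : HasPositiveIndex (fun x => x ⬝ᵥ (A - B * C⁻¹ * Bᵀ) *ᵥ x) t) :
    t + c = a + s := by
  refine HasPositiveIndex.add_eq_add_of_shear (C⁻¹ * Bᵀ).mulVecLin (A⁻¹ * B).mulVecLin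
    (fun x y => ?_) (by simp) (by simp) (by simp) (by simp) ht hc ha hs
  have hBt : y ⬝ᵥ Bᵀ *ᵥ x = x ⬝ᵥ B *ᵥ y := by
    rw [dotProduct_mulVec, vecMul_transpose, dotProduct_comm]
  have hyx := hC.dotProduct_mulVec_add_inv_mul_mulVec hCdet Bᵀ y x
  rw [transpose_transpose, hBt] at hyx
  rw [mulVecLin_apply, mulVecLin_apply, hyx, hA.dotProduct_mulVec_add_inv_mul_mulVec hAdet B x y,
    sub_mulVec, sub_mulVec, dotProduct_sub, dotProduct_sub]
  ring

end Haynsworth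

section Kuramoto

variable {N : ℕ} (θ : Fin N → ℝ)

/-- The `N × 2` matrix `[v w]`. -/
noncomputable def Bmat : Matrix (Fin N) (Fin 2) ℝ :=
  Matrix.of fun i => ![sin (θ i), cos (θ i)]

/-- The Schur complement of the `-D` block in `!![-D, B; Bᵀ, -1]`. -/
noncomputable def Smat : Matrix (Fin 2) (Fin 2) ℝ :=
  -1 - (Bmat θ)ᵀ * (-Dmat N θ)⁻¹ * Bmat θ

theorem kappa_eq_sum_sin_mul_add_sum_cos_mul (i : Fin N) :
    kappa N θ i = (∑ j, sin (θ j)) * sin (θ i) + (∑ j, cos (θ j)) * cos (θ i) := by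
  simp only [kappa, cos_sub, Finset.sum_add_distrib, Finset.sum_mul]
  ring

theorem sum_kappa :
    ∑ i, kappa N θ i = (∑ j, sin (θ j)) ^ 2 + (∑ j, cos (θ j)) ^ 2 := by
  simp only [kappa_eq_sum_sin_mul_add_sum_cos_mul, Finset.sum_add_distrib, ← Finset.mul_sum]
  ring

theorem sq_add_sq_pos_of_kappa_ne_zero {i : Fin N} (hi : kappa N θ i ≠ 0) :
    0 < (∑ j, sin (θ j)) ^ 2 + (∑ j, cos (θ j)) ^ 2 := by
  refine (by positivity : (0 : ℝ) ≤ _).lt_of_ne fun h => hi ?_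
  have hv : ∑ j, sin (θ j) = 0 := by nlinarith [sq_nonneg (∑ j, cos (θ j))]
  have hw : ∑ j, cos (θ j) = 0 := by nlinarith [sq_nonneg (∑ j, sin (θ j))]
  rw [kappa_eq_sum_sin_mul_add_sum_cos_mul, hv, hw]
  ring

theorem Jmat_eq_neg_Dmat_add_Bmat_mul_transpose :
    Jmat N θ = -Dmat N θ + Bmat θ * (Bmat θ)ᵀ := by
  ext i j
  simp only [Jmat, Dmat, Bmat, of_apply, Matrix.add_apply, Matrix.neg_apply, diagonal_apply,
    mul_apply, transpose_apply, Fin.sum_univ_two, Matrix.cons_val_zero, Matrix.cons_val_one]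
  split_ifs with hij
  · subst hij
    rw [kappa, ← Finset.sum_sdiff (Finset.subset_univ {i}), Finset.sum_singleton, sub_self,
      cos_zero]
    nlinarith [sin_sq_add_cos_sq (θ i)]
  · rw [cos_sub]
    ring

theorem inv_neg_Dmat (hκ : ∀ i, kappa N θ i ≠ 0) :
    (-Dmat N θ)⁻¹ = diagonal fun i => -(kappa N θ i)⁻¹ :=
  inv_eq_left_inv <| by
    rw [Dmat, diagonal_neg, diagonal_mul_diagonal]
    exact diagonal_eq_one.2 (funext fun i => by simp [hκ i])

theorem Bmat_mulVec (y : Fin 2 → ℝ) (i : Fin N) :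
    (Bmat θ *ᵥ y) i = y 0 * sin (θ i) + y 1 * cos (θ i) := by
  simp [Bmat, mulVec, dotProduct, Fin.sum_univ_two, mul_comm]

theorem dotProduct_Smat_mulVec (hκ : ∀ i, kappa N θ i ≠ 0) (y : Fin 2 → ℝ) :
    y ⬝ᵥ Smat θ *ᵥ y =
      ∑ i, (y 0 * sin (θ i) + y 1 * cos (θ i)) ^ 2 / kappa N θ i - (y 0 ^ 2 + y 1 ^ 2) := by
  rw [Smat, sub_mulVec, neg_mulVec, one_mulVec, dotProduct_sub, ← mulVec_mulVec, ← mulVec_mulVec,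
    dotProduct_mulVec y (Bmat θ)ᵀ, vecMul_transpose, inv_neg_Dmat θ hκ]
  simp only [dotProduct, mulVec_diagonal, Bmat_mulVec, Fin.sum_univ_two]
  have hterm : ∀ i, (y 0 * sin (θ i) + y 1 * cos (θ i)) *
      (-(kappa N θ i)⁻¹ * (y 0 * sin (θ i) + y 1 * cos (θ i))) =
      -((y 0 * sin (θ i) + y 1 * cos (θ i)) ^ 2 / kappa N θ i) := fun i => by ring
  simp only [hterm, Finset.sum_neg_distrib, Pi.neg_apply]
  ring

theorem sum_sq_div_kappa_sub (hκ : ∀ i, kappa N θ i ≠ 0)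
    (hR : (∑ j, sin (θ j)) ^ 2 + (∑ j, cos (θ j)) ^ 2 ≠ 0) (c d : ℝ) :
    ∑ i, (c * sin (θ i) + d * cos (θ i)) ^ 2 / kappa N θ i - (c ^ 2 + d ^ 2) =
      (∑ i, 1 / kappa N θ i - 2) / ((∑ j, sin (θ j)) ^ 2 + (∑ j, cos (θ j)) ^ 2) *
        (d * ∑ j, sin (θ j) - c * ∑ j, cos (θ j)) ^ 2 := by
  set Sv := ∑ j, sin (θ j)
  set Sw := ∑ j, cos (θ j)
  set R2 := Sv ^ 2 + Sw ^ 2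
  set P := c * Sv + d * Sw
  set Q := d * Sv - c * Sw
  -- `κ_i = (Sv, Sw)·(sin θ_i, cos θ_i)`; split `(c, d)·(sin θ_i, cos θ_i)` along `(Sv, Sw)` and
  -- its orthogonal direction, whose coefficients `Sv cos θ_i - Sw sin θ_i` sum to zero.
  have hterm : ∀ i, (c * sin (θ i) + d * cos (θ i)) ^ 2 / kappa N θ i =
      (P ^ 2 * kappa N θ i + 2 * P * Q * (Sv * cos (θ i) - Sw * sin (θ i)) +
        Q ^ 2 * (R2 * (1 / kappa N θ i) - kappa N θ i)) / R2 ^ 2 := by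
    intro i
    have hκi := hκ i
    field_simp
    rw [kappa_eq_sum_sin_mul_add_sum_cos_mul]
    linear_combination Q ^ 2 * R2 * sin_sq_add_cos_sq (θ i)
  have hm : ∑ i, (Sv * cos (θ i) - Sw * sin (θ i)) = 0 := by
    rw [Finset.sum_sub_distrib, ← Finset.mul_sum, ← Finset.mul_sum]
    ring
  simp only [hterm, ← Finset.sum_div, Finset.sum_add_distrib, ← Finset.mul_sum,
    Finset.sum_sub_distrib, hm, sum_kappa]
  field_simp
  ring

theorem dotProduct_Smat_mulVec_eq_mul_sq (hκ : ∀ i, kappa N θ i ≠ 0)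
    (hR : (∑ j, sin (θ j)) ^ 2 + (∑ j, cos (θ j)) ^ 2 ≠ 0) (y : Fin 2 → ℝ) :
    y ⬝ᵥ Smat θ *ᵥ y =
      (∑ i, 1 / kappa N θ i - 2) / ((∑ j, sin (θ j)) ^ 2 + (∑ j, cos (θ j)) ^ 2) *
        dotProductEquiv ℝ (Fin 2) ![-∑ j, cos (θ j), ∑ j, sin (θ j)] y ^ 2 := by
  rw [dotProduct_Smat_mulVec θ hκ, sum_sq_div_kappa_sub θ hκ hR]
  simp only [dotProductEquiv_apply_apply, dotProduct, Fin.sum_univ_two, Matrix.cons_val_zero,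
    Matrix.cons_val_one]
  ring

theorem card_pos_eigenvalues_Jmat_eq_add (hκ : ∀ i, kappa N θ i ≠ 0)
    (hJ : (Jmat N θ).IsHermitian) (hD : (-(Dmat N θ)).IsHermitian) {s : ℕ}
    (hs : HasPositiveIndex (fun y => y ⬝ᵥ Smat θ *ᵥ y) s) :
    #{i | 0 < hJ.eigenvalues i} = #{i | 0 < hD.eigenvalues i} + s := by
  have hDdet : IsUnit (-Dmat N θ).det := by
    rw [Dmat, det_neg, det_diagonal, isUnit_iff_ne_zero]
    exact mul_ne_zero (pow_ne_zero _ (by norm_num)) (prod_ne_zero_iff.2 fun i _ => hκ i)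
  have hJ' : HasPositiveIndex
      (fun x => x ⬝ᵥ (-Dmat N θ - Bmat θ * (-1 : Matrix (Fin 2) (Fin 2) ℝ)⁻¹ * (Bmat θ)ᵀ) *ᵥ x)
      #{i | 0 < hJ.eigenvalues i} := by
    rw [inv_eq_left_inv (by simp : (-1 : Matrix (Fin 2) (Fin 2) ℝ) * -1 = 1), Matrix.mul_neg,
      Matrix.mul_one, Matrix.neg_mul, sub_neg_eq_add, ← Jmat_eq_neg_Dmat_add_Bmat_mul_transpose]
    exact hJ.hasPositiveIndex
  have hC : HasPositiveIndex (fun y : Fin 2 → ℝ => y ⬝ᵥ (-1) *ᵥ y) 0 :=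
    hasPositiveIndex_zero_of_nonpos fun y => by
      rw [neg_mulVec, one_mulVec, dotProduct_neg, neg_nonpos]
      exact Finset.sum_nonneg fun i _ => mul_self_nonneg (y i)
  have := hasPositiveIndex_add_schur (isSymm_diagonal (kappa N θ)).neg isSymm_one.neg hDdet
    (by simp [det_neg]) (Bmat θ) hD.hasPositiveIndex hs hC hJ'
  omega

end Kuramoto

theorem stmt1 (N : ℕ) (hN : 2 ≤ N) (θ : Fin N → ℝ)
    (hκ : ∀ i, kappa N θ i ≠ 0)
    (hJ : (Jmat N θ).IsHermitian) (hD : (-(Dmat N θ)).IsHermitian) :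
    (∑ i, 1 / kappa N θ i < 2 →
      (Finset.univ.filter fun i => 0 < hJ.eigenvalues i).card
        = (Finset.univ.filter fun i => 0 < hD.eigenvalues i).card) ∧
    (2 < ∑ i, 1 / kappa N θ i →
      (Finset.univ.filter fun i => 0 < hJ.eigenvalues i).card
        = (Finset.univ.filter fun i => 0 < hD.eigenvalues i).card + 1) := by
  have hR := sq_add_sq_pos_of_kappa_ne_zero θ (hκ ⟨0, by omega⟩)
  have hℓ : dotProductEquiv ℝ (Fin 2) ![-∑ j, cos (θ j), ∑ j, sin (θ j)] ≠ 0 := by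
    refine (map_ne_zero_iff _ (LinearEquiv.injective _)).2 fun h => hR.ne' ?_
    have h₀ := congrFun h 0
    have h₁ := congrFun h 1
    simp_all
  have hS := funext (dotProduct_Smat_mulVec_eq_mul_sq θ hκ hR.ne')
  refine ⟨fun hτ => (card_pos_eigenvalues_Jmat_eq_add θ hκ hJ hD ?_).trans (add_zero _),
    fun hτ => card_pos_eigenvalues_Jmat_eq_add θ hκ hJ hD ?_⟩ <;> rw [hS]
  · exact hasPositiveIndex_zero_of_nonpos fun y =>
      mul_nonpos_of_nonpos_of_nonneg (div_nonpos_of_nonpos_of_nonneg (by linarith) hR.le)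
        (sq_nonneg _)
  · exact Module.Dual.hasPositiveIndex_mul_sq hℓ (div_pos (by linarith) hR)
end

section
/- Let θ ∈ ℝ^N satisfy |θ_i − θ_j| ≤ π for all i, j, and suppose J(θ) is negative semidefinite. Then for every ζ ∈ [0,1], the matrix J(ζθ) is negative semidefinite. (Consequently the set of stable configurations is star-shaped about the origin, hence simply connected.) -/
/-! `-J(θ)` is the weighted graph Laplacian with edge weights `cos (θ i - θ j)`, whose quadratic
form is `½ Σ_{i,j} cos (θ i - θ j) (x i - x j)²`. When every `|θ i - θ j| ≤ π`, scaling the phases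
by `ζ ∈ [0, 1]` can only increase each weight, because `cos` is even and decreasing on `[0, π]`;
so the quadratic form of `-J(ζθ)` dominates that of `-J(θ)`, which is nonnegative. -/

open Real Matrix Finset

/-- `J(θ)` is negative semidefinite iff `-J(θ)` is positive semidefinite. -/
def NegSemidefJ (N : ℕ) (θ : Fin N → ℝ) : Prop := (-(Jmat N θ)).PosSemidef

section WeightedLaplacian

variable {ι : Type*} [Fintype ι]

lemma sum_sum_mul_sub_sq_eq {W : Matrix ι ι ℝ} (hW : W.IsSymm) (x : ι → ℝ) :
    ∑ i, ∑ j, W i j * (x i - x j) ^ 2 = 2 * ∑ i, ∑ j, W i j * (x i ^ 2 - x i * x j) := by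
  have hswap : ∑ i, ∑ j, W i j * (x i ^ 2 - x i * x j) =
      ∑ i, ∑ j, W i j * (x j ^ 2 - x i * x j) := by
    rw [Finset.sum_comm]
    refine Finset.sum_congr rfl fun i _ => Finset.sum_congr rfl fun j _ => ?_
    rw [hW.apply i j]
    ring
  rw [two_mul]
  nth_rw 2 [hswap]
  simp only [← Finset.sum_add_distrib]
  exact Finset.sum_congr rfl fun i _ => Finset.sum_congr rfl fun j _ => by ring

variable [DecidableEq ι]

def weightedLaplacian (W : Matrix ι ι ℝ) : Matrix ι ι ℝ := diagonal (W *ᵥ 1) - W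

lemma dotProduct_weightedLaplacian_mulVec {W : Matrix ι ι ℝ} (hW : W.IsSymm) (x : ι → ℝ) :
    x ⬝ᵥ weightedLaplacian W *ᵥ x = (∑ i, ∑ j, W i j * (x i - x j) ^ 2) / 2 := by
  rw [sum_sum_mul_sub_sq_eq hW, mul_div_cancel_left₀ _ two_ne_zero, weightedLaplacian,
    sub_mulVec, dotProduct_sub]
  simp only [dotProduct, mulVec_diagonal]
  simp only [mulVec, dotProduct, Pi.one_apply, mul_one, Finset.mul_sum, Finset.sum_mul,
    ← Finset.sum_sub_distrib]
  exact Finset.sum_congr rfl fun i _ => Finset.sum_congr rfl fun j _ => by ring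

lemma weightedLaplacian_posSemidef_of_le {W W' : Matrix ι ι ℝ} (hW : W.IsSymm) (hW' : W'.IsSymm)
    (hle : ∀ i j, W i j ≤ W' i j) (hL : (weightedLaplacian W).PosSemidef) :
    (weightedLaplacian W').PosSemidef := by
  refine posSemidef_iff_dotProduct_mulVec.mpr ⟨(isHermitian_diagonal _).sub hW', fun x => ?_⟩
  have hx := (posSemidef_iff_dotProduct_mulVec.mp hL).2 x
  simp only [star_trivial, dotProduct_weightedLaplacian_mulVec hW,
    dotProduct_weightedLaplacian_mulVec hW'] at hx ⊢
  refine hx.trans (div_le_div_of_nonneg_right ?_ zero_le_two)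
  exact Finset.sum_le_sum fun i _ => Finset.sum_le_sum fun j _ =>
    mul_le_mul_of_nonneg_right (hle i j) (sq_nonneg _)

end WeightedLaplacian

lemma cos_le_cos_mul {ζ x : ℝ} (h0 : 0 ≤ ζ) (h1 : ζ ≤ 1) (hx : |x| ≤ π) :
    cos x ≤ cos (ζ * x) := by
  rw [← cos_abs x, ← cos_abs (ζ * x), abs_mul, abs_of_nonneg h0]
  exact cos_le_cos_of_nonneg_of_le_pi (by positivity) hx
    (mul_le_of_le_one_left (abs_nonneg x) h1)

noncomputable def cosDiffMatrix {N : ℕ} (θ : Fin N → ℝ) : Matrix (Fin N) (Fin N) ℝ :=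
  of fun i j => cos (θ i - θ j)

lemma cosDiffMatrix_isSymm {N : ℕ} (θ : Fin N → ℝ) : (cosDiffMatrix θ).IsSymm :=
  IsSymm.ext fun i j => by simp only [cosDiffMatrix, of_apply, ← cos_neg (θ i - θ j), neg_sub]

lemma neg_Jmat_eq_weightedLaplacian (N : ℕ) (θ : Fin N → ℝ) :
    -Jmat N θ = weightedLaplacian (cosDiffMatrix θ) := by
  ext i j
  by_cases h : i = j
  · subst h
    simp only [Jmat, cosDiffMatrix, weightedLaplacian, Matrix.neg_apply, Matrix.sub_apply, of_apply,
      if_pos, diagonal_apply_eq, mulVec, dotProduct, Pi.one_apply, mul_one, sub_self, cos_zero,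
      Finset.subset_univ, Finset.sum_sdiff_eq_sub, Finset.sum_singleton, neg_neg, sub_left_inj]
    exact Finset.sum_congr rfl fun k _ => by rw [← cos_neg, neg_sub]
  · simp [Jmat, weightedLaplacian, cosDiffMatrix, h]

theorem stmt3_general (N : ℕ) (θ : Fin N → ℝ)
    (hbd : ∀ i j, |θ i - θ j| ≤ Real.pi)
    (hstab : NegSemidefJ N θ) :
    ∀ ζ ∈ Set.Icc (0 : ℝ) 1, NegSemidefJ N (fun i => ζ * θ i) := by
  rintro ζ ⟨h0, h1⟩
  rw [NegSemidefJ, neg_Jmat_eq_weightedLaplacian] at hstab ⊢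
  refine weightedLaplacian_posSemidef_of_le (cosDiffMatrix_isSymm _) (cosDiffMatrix_isSymm _)
    (fun i j => ?_) hstab
  simpa only [cosDiffMatrix, of_apply, ← mul_sub] using cos_le_cos_mul h0 h1 (hbd i j)

theorem stmt3 (N : ℕ) (hN : 2 ≤ N) (θ : Fin N → ℝ)
    (hbd : ∀ i j, |θ i - θ j| ≤ Real.pi)
    (hstab : NegSemidefJ N θ) :
    ∀ ζ ∈ Set.Icc (0 : ℝ) 1, NegSemidefJ N (fun i => ζ * θ i) :=
  stmt3_general N θ hbd hstab
end

section
/- Let θ ∈ [0, π/2]^N and let V denote the set of vectors all of whose coordinates lie in {0, π/2} and which take both values 0 and π/2 (i.e. all vertices of the cube except the two constant vertices). Then the kernel of J(θ) has dimension 1 if θ ∉ V, and dimension 2 if θ ∈ V. In particular, for θ in the open cube (0,π/2)^N the kernel of J(θ) is exactly the span of the all-ones vector (1,1,...,1). -/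
open Real Matrix Finset

/-- The vertex set `V`: vectors with all coordinates in `{0, π/2}` taking both values. -/
def vertexSet (N : ℕ) : Set (Fin N → ℝ) :=
  {θ | (∀ i, θ i = 0 ∨ θ i = Real.pi / 2) ∧ (∃ i, θ i = 0) ∧ ∃ j, θ j = Real.pi / 2}

/-!
On the cube `[0, π/2]^N` the weights `cos (θ i - θ j)` are nonnegative, and `-J(θ)` is the
Laplacian of the complete graph with these weights: its quadratic form is
`½ ∑ cos (θ i - θ j) (v i - v j)²`, so the kernel consists of the vectors that are constant along
every edge of nonzero weight. A weight vanishes only when `{θ i, θ j} = {0, π/2}`. If some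
coordinate lies in `(0, π/2)` it is joined to all others and the kernel is spanned by `1`; otherwise
`θ` takes values in `{0, π/2}` and the kernel is the space of functions of `θ`, of dimension the
number of values taken.
-/

section WeightedLaplacian

variable {ι : Type*} [Fintype ι] {w : ι → ι → ℝ}

theorem sum_mul_sum_weight_mul_sub (hw : ∀ i j, w i j = w j i) (v : ι → ℝ) :
    ∑ i, v i * ∑ j, w i j * (v j - v i) = -(∑ i, ∑ j, w i j * (v i - v j) ^ 2) / 2 := by
  have hswap : ∑ i, ∑ j, w i j * v j ^ 2 = ∑ i, ∑ j, w i j * v i ^ 2 := by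
    rw [Finset.sum_comm]
    exact sum_congr rfl fun i _ => sum_congr rfl fun j _ => by rw [hw]
  have hexpand : ∑ i, ∑ j, w i j * (v i - v j) ^ 2
      = ∑ i, ∑ j, w i j * v j ^ 2 - ∑ i, ∑ j, w i j * v i ^ 2
        - 2 * ∑ i, v i * ∑ j, w i j * (v j - v i) := by
    simp only [mul_sum, ← sum_sub_distrib]
    exact sum_congr rfl fun i _ => sum_congr rfl fun j _ => by ring
  rw [hexpand, hswap]
  ring

theorem forall_sum_weight_mul_sub_eq_zero_iff (hw : ∀ i j, w i j = w j i)
    (hw₀ : ∀ i j, 0 ≤ w i j) (v : ι → ℝ) :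
    (∀ i, ∑ j, w i j * (v j - v i) = 0) ↔ ∀ i j, w i j ≠ 0 → v i = v j := by
  have hterm₀ : ∀ i j, 0 ≤ w i j * (v i - v j) ^ 2 := fun i j =>
    mul_nonneg (hw₀ i j) (sq_nonneg _)
  constructor
  · intro hv i j hij
    have hquad : ∑ i, ∑ j, w i j * (v i - v j) ^ 2 = 0 := by
      have := sum_mul_sum_weight_mul_sub hw v
      simp only [hv, mul_zero, sum_const_zero] at this
      linarith
    rw [Fintype.sum_eq_zero_iff_of_nonneg fun i => sum_nonneg fun j _ => hterm₀ i j] at hquad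
    have hrow := congr_fun hquad i
    rw [Pi.zero_apply, Fintype.sum_eq_zero_iff_of_nonneg (hterm₀ i)] at hrow
    have := congr_fun hrow j
    simp only [Pi.zero_apply, mul_eq_zero, hij, false_or, pow_eq_zero_iff two_ne_zero] at this
    exact sub_eq_zero.mp this
  · intro hv i
    refine sum_eq_zero fun j _ => ?_
    by_cases hij : w i j = 0
    · rw [hij, zero_mul]
    · rw [hv i j hij, sub_self, mul_zero]

end WeightedLaplacian

section FunLeft

variable {ι κ : Type*}

theorem mem_range_funLeft_iff {R M : Type*} [Semiring R] [AddCommMonoid M] [Module R M]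
    {f : ι → κ} {v : ι → M} :
    v ∈ LinearMap.range (LinearMap.funLeft R M f) ↔ v.FactorsThrough f := by
  constructor
  · rintro ⟨g, rfl⟩ a b hab
    simp [LinearMap.funLeft_apply, hab]
  · intro hv
    exact ⟨Function.extend f v 0, funext (hv.extend_apply 0)⟩

theorem finrank_range_funLeft {K : Type*} [Field K] [Finite κ] {f : ι → κ}
    (hf : f.Surjective) :
    Module.finrank K (LinearMap.range (LinearMap.funLeft K K f)) = Nat.card κ := by
  have := Fintype.ofFinite κ
  rw [LinearMap.finrank_range_of_inj (LinearMap.funLeft_injective_of_surjective _ _ f hf),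
    Module.finrank_fintype_fun_eq_card, Nat.card_eq_fintype_card]

end FunLeft

theorem mem_span_const_one_iff {ι K : Type*} [Field K] {v : ι → K} :
    v ∈ Submodule.span K {fun _ => (1 : K)} ↔ ∀ i j, v i = v j := by
  rw [Submodule.mem_span_singleton]
  constructor
  · rintro ⟨a, rfl⟩ i j
    rfl
  · intro hv
    rcases isEmpty_or_nonempty ι with hι | ⟨⟨i₀⟩⟩
    · exact ⟨0, Subsingleton.elim _ _⟩
    · exact ⟨v i₀, funext fun i => by simp [hv i i₀]⟩

section Cube

variable {x y : ℝ}

theorem cos_sub_nonneg_of_mem_Icc (hx : x ∈ Set.Icc 0 (π / 2)) (hy : y ∈ Set.Icc 0 (π / 2)) :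
    0 ≤ cos (x - y) :=
  cos_nonneg_of_mem_Icc ⟨by linarith [hx.1, hy.2], by linarith [hx.2, hy.1]⟩

theorem cos_sub_pos_of_mem_Ioo (hx : x ∈ Set.Icc 0 (π / 2)) (hy : y ∈ Set.Ioo 0 (π / 2)) :
    0 < cos (x - y) :=
  cos_pos_of_mem_Ioo ⟨by linarith [hx.1, hy.2], by linarith [hx.2, hy.1]⟩

theorem cos_sub_ne_zero_iff_of_mem_pair (hx : x = 0 ∨ x = π / 2) (hy : y = 0 ∨ y = π / 2) :
    cos (x - y) ≠ 0 ↔ x = y := by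
  rcases hx with rfl | rfl <;> rcases hy with rfl | rfl <;>
    simp [pi_div_two_pos.ne, pi_div_two_pos.ne']

end Cube

section Jacobian

variable {N : ℕ} {θ : Fin N → ℝ}

theorem Jmat_eq_sub_diagonal :
    Jmat N θ = Matrix.of (fun i j => cos (θ i - θ j))
      - diagonal (fun i => ∑ k, cos (θ i - θ k)) := by
  ext i j
  by_cases hij : i = j
  · subst hij
    simp only [Jmat, of_apply, if_pos, Matrix.sub_apply, diagonal_apply_eq, sub_self, cos_zero]
    rw [← add_sum_erase _ _ (mem_univ i), ← sdiff_singleton_eq_erase]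
    simp [← cos_neg (θ i - _)]
  · simp [Jmat, hij]

theorem Jmat_mulVec_apply (v : Fin N → ℝ) (i : Fin N) :
    (Jmat N θ *ᵥ v) i = ∑ j, cos (θ i - θ j) * (v j - v i) := by
  rw [Jmat_eq_sub_diagonal, sub_mulVec, Pi.sub_apply, mulVec_diagonal]
  simp [mulVec, dotProduct, mul_sub, sum_mul]

theorem mem_ker_Jmat_iff (hθ : ∀ i, θ i ∈ Set.Icc 0 (π / 2)) {v : Fin N → ℝ} :
    v ∈ LinearMap.ker (toLin' (Jmat N θ)) ↔ ∀ i j, cos (θ i - θ j) ≠ 0 → v i = v j := by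
  rw [LinearMap.mem_ker, toLin'_apply, funext_iff]
  simp only [Jmat_mulVec_apply, Pi.zero_apply]
  exact forall_sum_weight_mul_sub_eq_zero_iff (fun i j => by rw [← cos_neg, neg_sub])
    (fun i j => cos_sub_nonneg_of_mem_Icc (hθ i) (hθ j)) v

theorem ker_Jmat_eq_span_one (hθ : ∀ i, θ i ∈ Set.Icc 0 (π / 2)) (hV : θ ∉ vertexSet N) :
    LinearMap.ker (toLin' (Jmat N θ)) = Submodule.span ℝ {fun _ => (1 : ℝ)} := by
  ext v
  rw [mem_ker_Jmat_iff hθ, mem_span_const_one_iff]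
  refine ⟨fun hv i j => ?_, fun hv i j _ => hv i j⟩
  by_cases hvert : ∀ m, θ m = 0 ∨ θ m = π / 2
  · have hθij : θ i = θ j := by
      rcases hvert i with hi | hi <;> rcases hvert j with hj | hj
      · exact hi.trans hj.symm
      · exact (hV ⟨hvert, ⟨i, hi⟩, ⟨j, hj⟩⟩).elim
      · exact (hV ⟨hvert, ⟨j, hj⟩, ⟨i, hi⟩⟩).elim
      · exact hi.trans hj.symm
    exact hv i j (by simp [hθij])
  · push Not at hvert
    obtain ⟨m, hm₀, hm₁⟩ := hvert
    have hm : θ m ∈ Set.Ioo 0 (π / 2) :=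
      ⟨(hθ m).1.lt_of_ne' hm₀, (hθ m).2.lt_of_ne hm₁⟩
    rw [hv i m (cos_sub_pos_of_mem_Ioo (hθ i) hm).ne',
      hv j m (cos_sub_pos_of_mem_Ioo (hθ j) hm).ne']

theorem ker_Jmat_eq_range_funLeft (hV : θ ∈ vertexSet N) :
    LinearMap.ker (toLin' (Jmat N θ))
      = LinearMap.range (LinearMap.funLeft ℝ ℝ (Set.rangeFactorization θ)) := by
  have hθ : ∀ i, θ i ∈ Set.Icc 0 (π / 2) := fun i => by
    rcases hV.1 i with h | h <;> simp [h, pi_div_two_pos.le]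
  ext v
  rw [mem_ker_Jmat_iff hθ, mem_range_funLeft_iff]
  simp only [Function.FactorsThrough, Set.rangeFactorization_eq_rangeFactorization_iff,
    cos_sub_ne_zero_iff_of_mem_pair (hV.1 _) (hV.1 _)]

theorem range_eq_pair_of_mem_vertexSet (hV : θ ∈ vertexSet N) : Set.range θ = {0, π / 2} := by
  obtain ⟨hvert, ⟨i, hi⟩, ⟨j, hj⟩⟩ := hV
  ext x
  constructor
  · rintro ⟨k, rfl⟩
    exact hvert k
  · rintro (rfl | rfl)
    exacts [⟨i, hi⟩, ⟨j, hj⟩]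

theorem notMem_vertexSet_of_mem_Ioo (i : Fin N) (hi : θ i ∈ Set.Ioo 0 (π / 2)) :
    θ ∉ vertexSet N := fun hV => by
  rcases hV.1 i with h | h
  exacts [hi.1.ne' h, hi.2.ne h]

end Jacobian

theorem stmt9 (N : ℕ) (hN : 2 ≤ N) (θ : Fin N → ℝ)
    (hθ : ∀ i, θ i ∈ Set.Icc (0 : ℝ) (Real.pi / 2)) :
    (θ ∉ vertexSet N →
      Module.finrank ℝ (LinearMap.ker (Matrix.toLin' (Jmat N θ))) = 1) ∧
    (θ ∈ vertexSet N →
      Module.finrank ℝ (LinearMap.ker (Matrix.toLin' (Jmat N θ))) = 2) ∧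
    ((∀ i, θ i ∈ Set.Ioo (0 : ℝ) (Real.pi / 2)) →
      LinearMap.ker (Matrix.toLin' (Jmat N θ))
        = Submodule.span ℝ {fun _ : Fin N => (1 : ℝ)}) := by
  have i₀ : Fin N := ⟨0, by omega⟩
  refine ⟨fun hV => ?_, fun hV => ?_, fun hopen => ?_⟩
  · rw [ker_Jmat_eq_span_one hθ hV]
    exact finrank_span_singleton fun h => one_ne_zero (congr_fun h i₀)
  · rw [ker_Jmat_eq_range_funLeft hV, finrank_range_funLeft Set.rangeFactorization_surjective,
      Nat.card_coe_set_eq, range_eq_pair_of_mem_vertexSet hV, Set.ncard_pair pi_div_two_pos.ne]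
  · exact ker_Jmat_eq_span_one hθ (notMem_vertexSet_of_mem_Ioo i₀ (hopen i₀))
end
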